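/- Let V be a real Hilbert space, let a : V × V → ℝ be a bilinear form that is bounded (there exists M ≥ 0 with |a(v,w)| ≤ M·‖v‖·‖w‖ for all v, w ∈ V) and coercive (there exists α > 0 with a(v,v) ≥ α·‖v‖² for all v ∈ V), let L : V → ℝ be a continuous linear functional, and let K ⊆ V be a nonempty closed convex subset. Then there exists a unique u ∈ K such that a(u, u − v) ≤ L(u − v) for all v ∈ K. -/

import Mathlib

open RealInnerProductSpace

set_option maxHeartbeats 1600000

/-- **Lions–Stampacchia / well-posedness of the elliptic variational inequality.**
Let `V` be a real Hilbert space, `a` a bounded coercive bilinear form on `V`,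
`L` a continuous linear functional and `K ⊆ V` a nonempty closed convex set.
Then there is a unique `u ∈ K` with `a (u, u - v) ≤ L (u - v)` for all `v ∈ K`. -/
theorem stmt0 {V : Type*} [NormedAddCommGroup V] [InnerProductSpace ℝ V] [CompleteSpace V]
    (a : V →ₗ[ℝ] V →ₗ[ℝ] ℝ)
    (hbound : ∃ M : ℝ, 0 ≤ M ∧ ∀ v w : V, |a v w| ≤ M * ‖v‖ * ‖w‖)
    (hcoer : ∃ α : ℝ, 0 < α ∧ ∀ v : V, α * ‖v‖ ^ 2 ≤ a v v)
    (L : V →L[ℝ] ℝ)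
    (K : Set V) (hne : K.Nonempty) (hclosed : IsClosed K) (hconv : Convex ℝ K) :
    ∃! u : V, u ∈ K ∧ ∀ v ∈ K, a u (u - v) ≤ L (u - v) := by
  classical
  obtain ⟨M₀, hM₀, hMb⟩ := hbound
  obtain ⟨α, hα, hco⟩ := hcoer
  set M : ℝ := max M₀ α with hMdef
  have hMpos : 0 < M := lt_of_lt_of_le hα (le_max_right _ _)
  have hαM : α ≤ M := le_max_right _ _
  have hMb' : ∀ v w : V, |a v w| ≤ M * ‖v‖ * ‖w‖ := by
    intro v w
    refine (hMb v w).trans ?_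
    gcongr
    exact le_max_left _ _
  -- projection onto K
  have proj : ∀ x : V, ∃ y, y ∈ K ∧ ∀ w ∈ K, (inner ℝ (x - y) (w - y) : ℝ) ≤ 0 := by
    intro x
    obtain ⟨y, hy, heq⟩ :=
      exists_norm_eq_iInf_of_complete_convex hne hclosed.isComplete hconv x
    exact ⟨y, hy, (norm_eq_iInf_iff_real_inner_le_zero hconv hy).1 heq⟩
  choose P hPK hP using proj
  have Pnonexp : ∀ x y : V, ‖P x - P y‖ ≤ ‖x - y‖ := by
    intro x y
    have h1 := hP x (P y) (hPK y)
    have h2 := hP y (P x) (hPK x)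
    have hkey : ‖P x - P y‖ ^ 2 ≤ (inner ℝ (x - y) (P x - P y) : ℝ) := by
      have e1 : (inner ℝ (x - P x) (P y - P x) : ℝ) + (inner ℝ (y - P y) (P x - P y) : ℝ)
          = (inner ℝ (x - y) (P y - P x) : ℝ) + (inner ℝ (P x - P y) (P x - P y) : ℝ) := by
        have := inner_sub_left (𝕜 := ℝ) (x := x - P x) (y := y - P y) (z := P y - P x)
        have h3 : (inner ℝ (y - P y) (P x - P y) : ℝ) = -(inner ℝ (y - P y) (P y - P x) : ℝ) := by
          rw [← inner_neg_right]; rw [neg_sub]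
        have h4 : (x - P x) - (y - P y) = (x - y) + (P y - P x) := by abel
        rw [h3]
        have := inner_sub_left (𝕜 := ℝ) (x - P x) (y - P y) (P y - P x)
        rw [h4] at this
        rw [inner_add_left] at this
        have h5 : (inner ℝ (P y - P x) (P y - P x) : ℝ) = (inner ℝ (P x - P y) (P x - P y) : ℝ) := by
          rw [← inner_neg_neg]; simp [neg_sub]
        have h6 : (inner ℝ (x - y) (P y - P x) : ℝ) = (inner ℝ (x - y) (P y - P x) : ℝ) := rfl
        linarith [this, h5]
      have e2 : (inner ℝ (x - y) (P y - P x) : ℝ) = -(inner ℝ (x - y) (P x - P y) : ℝ) := by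
        rw [← inner_neg_right]; rw [neg_sub]
      have e3 : (inner ℝ (P x - P y) (P x - P y) : ℝ) = ‖P x - P y‖ ^ 2 := real_inner_self_eq_norm_sq _
      linarith [e1, e2, e3]
    have hcs : (inner ℝ (x - y) (P x - P y) : ℝ) ≤ ‖x - y‖ * ‖P x - P y‖ := real_inner_le_norm _ _
    rcases eq_or_lt_of_le (norm_nonneg (P x - P y)) with h | h
    · rw [← h]; exact norm_nonneg _
    · nlinarith
  -- the operator A and the element f representing L
  obtain ⟨A, hA⟩ : ∃ A : V → V, ∀ u w : V, (inner ℝ (A u) (w) : ℝ) = a u w :=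
    ⟨fun u => (InnerProductSpace.toDual ℝ V).symm
      ((a u).mkContinuous (M * ‖u‖) (fun w => by
        simpa [Real.norm_eq_abs, mul_assoc] using hMb' u w)),
      fun u w => InnerProductSpace.toDual_symm_apply⟩
  obtain ⟨f, hf⟩ : ∃ f : V, ∀ w : V, (inner ℝ (f) (w) : ℝ) = L w :=
    ⟨(InnerProductSpace.toDual ℝ V).symm L, fun w => InnerProductSpace.toDual_symm_apply⟩
  have hAdiff : ∀ u v w : V, (inner ℝ (A u - A v) (w) : ℝ) = a (u - v) w := by
    intro u v w
    rw [inner_sub_left, hA, hA, map_sub, LinearMap.sub_apply]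
  have hAnorm : ∀ u v : V, ‖A u - A v‖ ≤ M * ‖u - v‖ := by
    intro u v
    rcases eq_or_lt_of_le (norm_nonneg (A u - A v)) with h | h
    · rw [← h]; positivity
    · have h2 : ‖A u - A v‖ ^ 2 = a (u - v) (A u - A v) := by
        rw [← hAdiff, real_inner_self_eq_norm_sq]
      have h3 : a (u - v) (A u - A v) ≤ M * ‖u - v‖ * ‖A u - A v‖ :=
        le_trans (le_abs_self _) (hMb' _ _)
      nlinarith
  set ρ : ℝ := α / M ^ 2 with hρdef
  have hρpos : 0 < ρ := by positivity
  set T : V → V := fun u => P (u - ρ • (A u - f)) with hTdef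
  set c : ℝ := 1 - α ^ 2 / M ^ 2 with hcdef
  have hc0 : 0 ≤ c := by
    rw [hcdef]
    have : α ^ 2 / M ^ 2 ≤ 1 := by
      rw [div_le_one (by positivity)]; nlinarith
    linarith
  have hc1 : c < 1 := by
    rw [hcdef]
    have : 0 < α ^ 2 / M ^ 2 := by positivity
    linarith
  have hcontr : ∀ u v : V, ‖T u - T v‖ ≤ Real.sqrt c * ‖u - v‖ := by
    intro u v
    have harg : (u - ρ • (A u - f)) - (v - ρ • (A v - f))
        = (u - v) - ρ • (A u - A v) := by
      simp only [smul_sub]; abel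
    have h1 : ‖T u - T v‖ ≤ ‖(u - v) - ρ • (A u - A v)‖ := by
      rw [← harg]; exact Pnonexp _ _
    have hsq : ‖(u - v) - ρ • (A u - A v)‖ ^ 2
        = ‖u - v‖ ^ 2 - 2 * (ρ * (inner ℝ (u - v) (A u - A v) : ℝ)) + ρ ^ 2 * ‖A u - A v‖ ^ 2 := by
      rw [norm_sub_sq_real, real_inner_smul_right, norm_smul, Real.norm_eq_abs,
        abs_of_pos hρpos, mul_pow]
    have hinner : α * ‖u - v‖ ^ 2 ≤ (inner ℝ (u - v) (A u - A v) : ℝ) := by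
      rw [real_inner_comm, hAdiff]; exact hco _
    have hAn := hAnorm u v
    have hAn2 : ‖A u - A v‖ ^ 2 ≤ M ^ 2 * ‖u - v‖ ^ 2 := by
      nlinarith [norm_nonneg (A u - A v), norm_nonneg (u - v)]
    have hest : ‖(u - v) - ρ • (A u - A v)‖ ^ 2 ≤ c * ‖u - v‖ ^ 2 := by
      rw [hsq]
      have hρM : ρ ^ 2 * ‖A u - A v‖ ^ 2 ≤ ρ ^ 2 * (M ^ 2 * ‖u - v‖ ^ 2) := by
        have : (0:ℝ) ≤ ρ ^ 2 := by positivity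
        nlinarith
      have hc' : c = 1 - 2 * (ρ * α) + ρ ^ 2 * M ^ 2 := by
        rw [hcdef, hρdef]; field_simp; ring
      nlinarith [hinner]
    calc ‖T u - T v‖ ≤ ‖(u - v) - ρ • (A u - A v)‖ := h1
      _ = Real.sqrt (‖(u - v) - ρ • (A u - A v)‖ ^ 2) := by
          rw [Real.sqrt_sq (norm_nonneg _)]
      _ ≤ Real.sqrt (c * ‖u - v‖ ^ 2) := Real.sqrt_le_sqrt hest
      _ = Real.sqrt c * ‖u - v‖ := by
          rw [Real.sqrt_mul hc0, Real.sqrt_sq (norm_nonneg _)]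
  -- Banach fixed point
  haveI : Nonempty V := ⟨hne.choose⟩
  set k : NNReal := Real.toNNReal (Real.sqrt c) with hkdef
  have hk1 : k < 1 := by
    rw [hkdef]
    exact Real.toNNReal_lt_one.2 (by rw [← Real.sqrt_one]; exact Real.sqrt_lt_sqrt hc0 hc1)
  have hlip : LipschitzWith k T := by
    apply LipschitzWith.of_dist_le_mul
    intro x y
    rw [dist_eq_norm, dist_eq_norm, hkdef, Real.coe_toNNReal _ (Real.sqrt_nonneg c)]
    exact hcontr x y
  have hC : ContractingWith k T := ⟨hk1, hlip⟩
  obtain ⟨u, hfix⟩ : ∃ u : V, T u = u := ⟨hC.fixedPoint T, hC.fixedPoint_isFixedPt⟩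
  have hfix' : P (u - ρ • (A u - f)) = u := hfix
  have huK : u ∈ K := by rw [← hfix']; exact hPK _
  have huVI : ∀ v ∈ K, a u (u - v) ≤ L (u - v) := by
    intro w hw
    have h1 := hP (u - ρ • (A u - f)) w hw
    rw [hfix'] at h1
    have h2 : (u - ρ • (A u - f)) - u = -(ρ • (A u - f)) := by abel
    rw [h2, inner_neg_left, real_inner_smul_left, inner_sub_left, hA, hf] at h1
    have h3' : ρ * 0 ≤ ρ * (a u (w - u) - L (w - u)) := by
      rw [mul_zero]; linarith [h1]
    have h3 : L (w - u) ≤ a u (w - u) := by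
      have := le_of_mul_le_mul_left h3' hρpos
      linarith
    have h4 : a u (u - w) = -(a u (w - u)) := by
      rw [show u - w = -(w - u) by abel, map_neg]
    have h5 : L (u - w) = -(L (w - u)) := by
      rw [show u - w = -(w - u) by abel, map_neg]
    rw [h4, h5]
    linarith [h3]
  refine ⟨u, ⟨huK, huVI⟩, ?_⟩
  rintro y ⟨hyK, hy⟩
  have h1 := hy u huK
  have h2 := huVI y hyK
  have e1 : a (y - u) (y - u) = a y (y - u) - a u (y - u) := by
    simp only [map_sub, LinearMap.sub_apply]
    ring
  have e2 : a u (u - y) = -(a u (y - u)) := by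
    rw [show u - y = -(y - u) by abel, map_neg]
  have e3 : L (u - y) = -(L (y - u)) := by
    rw [show u - y = -(y - u) by abel, map_neg]
  have hsum : a (y - u) (y - u) ≤ 0 := by
    rw [e1]; rw [e2, e3] at h2; linarith
  have hcoyu := hco (y - u)
  have hsq : ‖y - u‖ ^ 2 ≤ 0 := by nlinarith
  have hsq0 : ‖y - u‖ ^ 2 = 0 := le_antisymm hsq (sq_nonneg _)
  have hnz : ‖y - u‖ = 0 := by
    have := pow_eq_zero_iff (n := 2) (by norm_num) |>.1 hsq0
    exact this
  have : y - u = 0 := by rwa [norm_eq_zero] at hnz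
  exact sub_eq_zero.mp this
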